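/- arXiv:1311.5863 — 4 statements merged into one kernel-verified Lean document; each statement's English description precedes it below -/
import Mathlib

section
/- If G is a chordal graph and X is a minimal separator of G, then every connected component of G − X contains a vertex that is simplicial in G. -/
open SimpleGraph

/-- A graph is chordal if it contains no induced cycle of length 4 or greater. -/
def IsChordal {V : Type*} (G : SimpleGraph V) : Prop :=
  ∀ n : ℕ, 4 ≤ n → IsEmpty (cycleGraph n ↪g G)

/-- `X` is a `u`-`v` separator: `u, v ∉ X` and every walk from `u` to `v` meets `X`. -/
def Separates {V : Type*} (G : SimpleGraph V) (X : Set V) (u v : V) : Prop :=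
  u ∉ X ∧ v ∉ X ∧ ∀ p : G.Walk u v, ∃ x ∈ p.support, x ∈ X

/-- `w` and `s` lie in the same connected component of `G - X`:
there is a walk between them avoiding `X`. -/
def ReachableAvoiding {V : Type*} (G : SimpleGraph V) (X : Set V) (w s : V) : Prop :=
  ∃ p : G.Walk w s, ∀ x ∈ p.support, x ∉ X

/-- A vertex is simplicial if its neighbourhood is a clique. -/
def IsSimplicial {V : Type*} (G : SimpleGraph V) (s : V) : Prop :=
  G.IsClique (G.neighborSet s)

/-!
A minimal `u`-`v` separator `X` of a chordal graph is a clique: two non-adjacent `x, y ∈ X` would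
be joined by induced paths through the components of `u` and of `v` in `G - X`, and these two
paths together form an induced cycle of length at least four.

Dirac's lemma says that a finite chordal graph is complete or has two non-adjacent simplicial
vertices. Applied to the subgraph induced by a component `C` of `G - X` together with the clique
`X`, it yields a simplicial vertex lying in `C` (two non-adjacent vertices cannot both lie in the
clique); since its neighbourhood is contained in `C ∪ X`, it is simplicial in `G` as well.
Dirac's lemma itself follows by induction on the number of vertices, applying this argument on
both sides of a minimal separator of two non-adjacent vertices.
-/

namespace SimpleGraph.Walk

variable {V : Type*} {G : SimpleGraph V} {u v w : V}

theorem IsChordless.reverse {p : G.Walk u v} (hp : p.IsChordless) : p.reverse.IsChordless := by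
  rw [isChordless_iff_forall_mem_edges] at hp ⊢
  simp only [support_reverse, edges_reverse, List.mem_reverse]
  exact fun _ _ ha hb hab => hp ha hb hab

theorem IsChordless.append {p : G.Walk u v} {q : G.Walk v w} (hp : p.IsChordless)
    (hq : q.IsChordless)
    (hpq : ∀ a ∈ p.support, ∀ b ∈ q.support, G.Adj a b → a ∈ q.support ∨ b ∈ p.support) :
    (p.append q).IsChordless := by
  rw [isChordless_iff_forall_mem_edges] at hp hq ⊢
  intro a b ha hb hab
  rw [edges_append, List.mem_append]
  rw [mem_support_append_iff] at ha hb
  rcases ha with ha | ha <;> rcases hb with hb | hb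
  · exact .inl (hp ha hb hab)
  · rcases hpq a ha b hb hab with ha' | hb'
    exacts [.inr (hq ha' hb hab), .inl (hp ha hb' hab)]
  · rcases hpq b hb a ha hab.symm with hb' | ha'
    exacts [.inr (hq ha hb' hab), .inl (hp ha' hb hab)]
  · exact .inr (hq ha hb hab)

theorem isChordless_of_forall_length_le {p : G.Walk u v}
    (hp : ∀ q : G.Walk u v, q.support ⊆ p.support → p.length ≤ q.length) : p.IsChordless := by
  rw [isChordless_iff_forall_mem_edges]
  suffices h : ∀ i j, i < j → j ≤ p.length → G.Adj (p.getVert i) (p.getVert j) →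
      s(p.getVert i, p.getVert j) ∈ p.edges by
    intro a b ha hb hab
    obtain ⟨i, rfl, hi⟩ := mem_support_iff_exists_getVert.1 ha
    obtain ⟨j, rfl, hj⟩ := mem_support_iff_exists_getVert.1 hb
    rcases lt_trichotomy i j with hij | rfl | hij
    · exact h i j hij hj hab
    · exact absurd rfl hab.ne
    · exact Sym2.eq_swap ▸ h j i hij hi hab.symm
  intro i j hij hj hadj
  by_cases hsucc : j = i + 1
  · exact (mk_mem_edges_iff_exists p).2 ⟨i, by omega, hsucc ▸ rfl⟩
  let q := (p.take i).append (cons hadj (p.drop j))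
  have hq : q.support ⊆ p.support := by
    intro z hz
    rcases (mem_support_append_iff _ _).1 hz with hz | hz
    · exact (isSubwalk_take p i).support_subset hz
    · rcases List.mem_cons.1 (support_cons hadj _ ▸ hz) with rfl | hz
      · exact getVert_mem_support p i
      · exact (isSubwalk_drop p j).support_subset hz
  have := hp q hq
  simp only [q, length_append, length_cons, take_length, drop_length] at this
  omega

theorem exists_isPath_isChordless (w : G.Walk u v) :
    ∃ p : G.Walk u v, p.IsPath ∧ p.IsChordless ∧ p.support ⊆ w.support := by
  classical
  let P : ℕ → Prop := fun n => ∃ q : G.Walk u v, q.support ⊆ w.support ∧ q.length = n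
  have hP : ∃ n, P n := ⟨w.length, w, List.Subset.refl _, rfl⟩
  obtain ⟨q, hqw, hq⟩ := Nat.find_spec hP
  have hmin : ∀ r : G.Walk u v, r.support ⊆ w.support → q.length ≤ r.length :=
    fun r hr => hq ▸ Nat.find_min' hP ⟨r, hr, rfl⟩
  have hbq : q.bypass.support ⊆ w.support := List.Subset.trans (support_bypass_subset_support q) hqw
  refine ⟨q.bypass, q.bypass_isPath, isChordless_of_forall_length_le fun r hr => ?_, hbq⟩
  exact (length_bypass_le_length q).trans (hmin r (List.Subset.trans hr hbq))

end SimpleGraph.Walk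

namespace IsChordal

open Walk

variable {V : Type*} {G : SimpleGraph V}

theorem length_le_three_of_isCycle (hG : IsChordal G) {v : V} {p : G.Walk v v}
    (hc : p.IsCycle) (hch : p.IsChordless) : p.length ≤ 3 := by
  by_contra! hlen
  obtain ⟨m, hm⟩ : ∃ m, p.length = m + 2 := ⟨p.length - 2, by omega⟩
  let f : Fin (m + 2) → V := fun i => p.getVert i
  have hf_succ (i : Fin (m + 2)) : f (i + 1) = p.getVert (i + 1) := by
    change p.getVert ↑(i + 1) = _
    rw [Fin.val_add_one]
    split_ifs with hi
    · rw [hi, Fin.val_last, ← hm, getVert_length, getVert_zero]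
    · rfl
  have hf_inj : Function.Injective f := fun i j hij =>
    Fin.ext (hc.getVert_injOn' (by simp; omega) (by simp; omega) hij)
  have hf_adj (i j : Fin (m + 2)) : G.Adj (f i) (f j) ↔ (cycleGraph (m + 2)).Adj i j := by
    rw [cycleGraph_adj, sub_eq_iff_eq_add, sub_eq_iff_eq_add, add_comm 1 j, add_comm 1 i]
    constructor
    · intro hij
      obtain ⟨k, hk, hkij⟩ := (mk_mem_edges_iff_exists p).1 <|
        hch.mem_edges (getVert_mem_support ..) (getVert_mem_support ..) hij
      have hkij : s(f ⟨k, by omega⟩, f (⟨k, by omega⟩ + 1)) = s(f i, f j) := by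
        rw [hf_succ]; exact hkij
      rcases Sym2.eq_iff.1 hkij with ⟨hki, hkj⟩ | ⟨hkj, hki⟩
      · exact Or.inr (hf_inj hkj ▸ hf_inj hki ▸ rfl)
      · exact Or.inl (hf_inj hki ▸ hf_inj hkj ▸ rfl)
    · rintro (rfl | rfl)
      · rw [hf_succ]; exact (p.adj_getVert_succ (by omega)).symm
      · rw [hf_succ]; exact p.adj_getVert_succ (by omega)
  exact (hG (m + 2) (by omega)).false ⟨⟨f, hf_inj⟩, hf_adj _ _⟩

theorem adj_of_isPath_isChordless (hG : IsChordal G) {x y : V} (hxy : x ≠ y)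
    {p q : G.Walk x y} (hp : p.IsPath) (hq : q.IsPath) (hpc : p.IsChordless)
    (hqc : q.IsChordless)
    (hpq : ∀ a ∈ p.support, ∀ b ∈ q.support, a ≠ x → a ≠ y → b ≠ x → b ≠ y →
      a ≠ b ∧ ¬G.Adj a b) :
    G.Adj x y := by
  by_contra hnadj
  have two_le_length (r : G.Walk x y) : 2 ≤ r.length := by
    by_contra! hr
    interval_cases hlen : r.length
    exacts [hxy (eq_of_length_eq_zero hlen), hnadj (adj_of_length_eq_one hlen)]
  have start_notMem_tail {a b : V} {r : G.Walk a b} (hr : r.IsPath) : a ∉ r.support.tail :=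
    (List.nodup_cons.1 (r.cons_tail_support ▸ hr.support_nodup)).1
  have hcyc : (p.append q.reverse).IsCycle := by
    refine hp.isCycle_append hq.reverse (fun z hzp hzq => ?_) (.inl (two_le_length p))
    by_cases hzx : z = x
    · exact start_notMem_tail hp (hzx ▸ hzp)
    by_cases hzy : z = y
    · exact start_notMem_tail hq.reverse (hzy ▸ hzq)
    have hzq' : z ∈ q.support := by simpa using List.mem_of_mem_tail hzq
    exact (hpq z (List.mem_of_mem_tail hzp) z hzq' hzx hzy hzx hzy).1 rfl
  have hch : (p.append q.reverse).IsChordless := by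
    refine hpc.append hqc.reverse fun a ha b hb hab => ?_
    rw [support_reverse, List.mem_reverse] at hb ⊢
    by_cases hxya : a = x ∨ a = y
    · rcases hxya with rfl | rfl
      exacts [.inl q.start_mem_support, .inl q.end_mem_support]
    by_cases hxyb : b = x ∨ b = y
    · rcases hxyb with rfl | rfl
      exacts [.inr p.start_mem_support, .inr p.end_mem_support]
    push Not at hxya hxyb
    exact absurd hab (hpq a ha b hb hxya.1 hxya.2 hxyb.1 hxyb.2).2
  have := hG.length_le_three_of_isCycle hcyc hch
  rw [length_append, length_reverse] at this
  have := two_le_length p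
  have := two_le_length q
  omega

end IsChordal

section Separation

variable {V : Type*} {G : SimpleGraph V} {X : Set V} {a b c u v : V}

theorem ReachableAvoiding.refl (ha : a ∉ X) : ReachableAvoiding G X a a :=
  ⟨.nil, by simpa using ha⟩

theorem ReachableAvoiding.symm (h : ReachableAvoiding G X a b) : ReachableAvoiding G X b a := by
  obtain ⟨p, hp⟩ := h
  exact ⟨p.reverse, by simpa using hp⟩

theorem ReachableAvoiding.trans (hab : ReachableAvoiding G X a b)
    (hbc : ReachableAvoiding G X b c) : ReachableAvoiding G X a c := by
  obtain ⟨p, hp⟩ := hab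
  obtain ⟨q, hq⟩ := hbc
  refine ⟨p.append q, fun z hz => ?_⟩
  rcases (Walk.mem_support_append_iff _ _).1 hz with hz | hz
  exacts [hp z hz, hq z hz]

theorem ReachableAvoiding.notMem_right (h : ReachableAvoiding G X a b) : b ∉ X := by
  obtain ⟨p, hp⟩ := h
  exact hp b p.end_mem_support

theorem ReachableAvoiding.of_adj (h : ReachableAvoiding G X a b) (hbc : G.Adj b c) (hc : c ∉ X) :
    ReachableAvoiding G X a c := by
  obtain ⟨p, hp⟩ := h
  refine ⟨p.concat hbc, fun z hz => ?_⟩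
  rw [Walk.support_concat, List.mem_append, List.mem_singleton] at hz
  rcases hz with hz | rfl
  exacts [hp z hz, hc]

theorem ReachableAvoiding.of_mem_support {p : G.Walk a b} (hp : ∀ z ∈ p.support, z ∉ X)
    (hc : c ∈ p.support) : ReachableAvoiding G X a c := by
  classical
  exact ⟨p.takeUntil c hc, fun z hz => hp z (p.support_takeUntil_subset_support hc hz)⟩

theorem separates_comm : Separates G X u v ↔ Separates G X v u := by
  refine ⟨fun ⟨hu, hv, h⟩ => ⟨hv, hu, fun p => ?_⟩, fun ⟨hv, hu, h⟩ => ⟨hu, hv, fun p => ?_⟩⟩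
  all_goals simpa using h p.reverse

theorem Separates.not_reachableAvoiding (h : Separates G X u v) : ¬ReachableAvoiding G X u v :=
  fun ⟨p, hp⟩ => by
    obtain ⟨z, hz, hzX⟩ := h.2.2 p
    exact hp z hz hzX

theorem exists_reachableAvoiding_adj_of_mem_support {p : G.Walk u v} (hu : u ∉ X) {x : V}
    (hx : x ∈ p.support) (hxX : x ∈ X) :
    ∃ z y, y ∈ p.support ∧ y ∈ X ∧ G.Adj z y ∧ ReachableAvoiding G X u z := by
  induction p with
  | nil => exact absurd (List.mem_singleton.1 hx ▸ hxX) hu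
  | @cons u u' _ h q ih =>
    by_cases hu' : u' ∈ X
    · exact ⟨u, u', by simp, hu', h, .refl hu⟩
    obtain ⟨z, y, hyq, hyX, hzy, hu'z⟩ := ih hu' <| by
      rcases List.mem_cons.1 (Walk.support_cons h q ▸ hx) with rfl | hx
      exacts [absurd hxX hu, hx]
    exact ⟨z, y, by simp [hyq], hyX, hzy, ((ReachableAvoiding.refl hu).of_adj h hu').trans hu'z⟩

theorem exists_adj_reachableAvoiding_of_minimal (hX : Minimal (Separates G · u v) X) {x : V}
    (hx : x ∈ X) : ∃ z, G.Adj x z ∧ ReachableAvoiding G X u z := by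
  have hsep := hX.prop
  have hnot : ¬Separates G (X \ {x}) u v :=
    hX.not_prop_of_ssubset (Set.sdiff_singleton_ssubset.2 hx)
  simp only [Separates, not_and, not_forall, not_exists, not_and] at hnot
  obtain ⟨p, hp⟩ := hnot (fun h => hsep.1 h.1) (fun h => hsep.2.1 h.1)
  obtain ⟨x', hx'p, hx'X⟩ := hsep.2.2 p
  obtain ⟨z, y, hyp, hyX, hzy, huz⟩ := exists_reachableAvoiding_adj_of_mem_support hsep.1 hx'p hx'X
  obtain rfl : y = x := by_contra fun hyx => hp y hyp ⟨hyX, hyx⟩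
  exact ⟨z, hzy.symm, huz⟩

theorem exists_isPath_isChordless_of_minimal_separates {x y : V}
    (hX : Minimal (Separates G · u v) X) (hx : x ∈ X) (hy : y ∈ X) :
    ∃ p : G.Walk x y, p.IsPath ∧ p.IsChordless ∧
      ∀ z ∈ p.support, z ≠ x → z ≠ y → ReachableAvoiding G X u z := by
  obtain ⟨a, hxa, hua⟩ := exists_adj_reachableAvoiding_of_minimal hX hx
  obtain ⟨b, hyb, hub⟩ := exists_adj_reachableAvoiding_of_minimal hX hy
  obtain ⟨r, hr⟩ := hua.symm.trans hub
  obtain ⟨p, hp, hpc, hpw⟩ := (Walk.cons hxa (r.concat hyb.symm)).exists_isPath_isChordless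
  refine ⟨p, hp, hpc, fun z hz hzx hzy => ?_⟩
  have hzw := hpw hz
  simp only [Walk.support_cons, Walk.support_concat, List.mem_cons, List.mem_append,
    List.not_mem_nil, or_false] at hzw
  rcases hzw with rfl | hzr | rfl
  exacts [absurd rfl hzx, hua.trans (.of_mem_support hr hzr), absurd rfl hzy]

theorem IsChordal.isClique_of_minimal_separates (hG : IsChordal G)
    (hX : Minimal (Separates G · u v) X) : G.IsClique X := by
  intro x hx y hy hxy
  obtain ⟨p, hp, hpc, hpu⟩ := exists_isPath_isChordless_of_minimal_separates hX hx hy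
  obtain ⟨q, hq, hqc, hqv⟩ := exists_isPath_isChordless_of_minimal_separates
    (show Minimal (Separates G · v u) X by simpa only [separates_comm] using hX) hx hy
  refine hG.adj_of_isPath_isChordless hxy hp hq hpc hqc fun a ha b hb hax hay hbx hby => ?_
  have hua := hpu a ha hax hay
  have hvb := hqv b hb hbx hby
  have huv := hX.prop.not_reachableAvoiding
  exact ⟨fun hab => huv (hua.trans (hab ▸ hvb.symm)),
    fun hab => huv ((hua.of_adj hab hvb.notMem_right).trans hvb.symm)⟩

end Separation

section Dirac

variable {V : Type*} {G : SimpleGraph V}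

theorem IsChordal.induce (hG : IsChordal G) (A : Set V) : IsChordal (G.induce A) :=
  fun n hn => ⟨fun e => (hG n hn).false (e.trans (Embedding.induce A))⟩

theorem IsSimplicial.of_induce {A : Set V} {s : A} (hs : IsSimplicial (G.induce A) s)
    (hN : G.neighborSet s ⊆ A) : IsSimplicial G s :=
  fun a ha b hb hab =>
    hs (x := ⟨a, hN ha⟩) (y := ⟨b, hN hb⟩) ha hb fun h => hab (congrArg Subtype.val h)

theorem exists_reachableAvoiding_isSimplicial {K A : Set V} (hK : G.IsClique K) {c : V}
    (hc : c ∉ K) (hA : A = {z | ReachableAvoiding G K c z} ∪ K)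
    (hD : G.induce A = ⊤ ∨ ∃ s t, s ≠ t ∧ ¬(G.induce A).Adj s t ∧
      IsSimplicial (G.induce A) s ∧ IsSimplicial (G.induce A) t) :
    ∃ s, ReachableAvoiding G K c s ∧ IsSimplicial G s := by
  have hN {s : V} (hs : ReachableAvoiding G K c s) : G.neighborSet s ⊆ A := fun z hz => by
    rw [hA]
    by_cases hzK : z ∈ K
    exacts [.inr hzK, .inl (hs.of_adj hz hzK)]
  have hreach (z : A) (hzK : z.1 ∉ K) : ReachableAvoiding G K c z :=
    (hA ▸ z.2 : z.1 ∈ {z | ReachableAvoiding G K c z} ∪ K).resolve_right hzK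
  rcases hD with htop | ⟨s, t, hst, hnadj, hs, ht⟩
  · have hc' : IsSimplicial (G.induce A) ⟨c, hA ▸ .inl (.refl hc)⟩ := by
      rw [htop]; exact IsClique.top _
    exact ⟨c, .refl hc, hc'.of_induce (hN (.refl hc))⟩
  by_cases hsK : s.1 ∈ K
  · have htK : t.1 ∉ K := fun htK => hnadj (hK hsK htK (Subtype.coe_ne_coe.2 hst))
    exact ⟨t, hreach t htK, ht.of_induce (hN (hreach t htK))⟩
  · exact ⟨s, hreach s hsK, hs.of_induce (hN (hreach s hsK))⟩

theorem IsChordal.eq_top_or_exists_isSimplicial {W : Type*} [Finite W] {H : SimpleGraph W}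
    (hH : IsChordal H) :
    H = ⊤ ∨ ∃ s t, s ≠ t ∧ ¬H.Adj s t ∧ IsSimplicial H s ∧ IsSimplicial H t := by
  induction hn : Nat.card W using Nat.strong_induction_on generalizing W with
  | _ n ih =>
  refine or_iff_not_imp_left.2 fun hne => ?_
  obtain ⟨a, b, hab, hnadj⟩ : ∃ a b, a ≠ b ∧ ¬H.Adj a b := by
    by_contra! h
    exact hne (by ext a b; exact ⟨fun h' => h'.ne, h a b⟩)
  have hsep : Separates H {a, b}ᶜ a b := by
    refine ⟨by simp, by simp, fun p => ?_⟩
    cases p with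
    | nil => exact absurd rfl hab
    | @cons _ z _ h q => exact ⟨z, by simp, by simpa using ⟨h.ne.symm, fun hzb => hnadj (hzb ▸ h)⟩⟩
  obtain ⟨S, -, hS⟩ := exists_minimal_le_of_wellFoundedLT (Separates H · a b) _ hsep
  have side {c d : W} (hS : Minimal (Separates H · c d) S) :
      ∃ s, ReachableAvoiding H S c s ∧ IsSimplicial H s := by
    refine exists_reachableAvoiding_isSimplicial (hH.isClique_of_minimal_separates hS) hS.prop.1
      rfl (ih _ ?_ (hH.induce _) rfl)
    exact hn ▸ Finite.card_subtype_lt (x := d) fun hd =>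
      hd.elim hS.prop.not_reachableAvoiding hS.prop.2.1
  obtain ⟨s, has, hs⟩ := side hS
  obtain ⟨t, hbt, ht⟩ := side (show Minimal (Separates H · b a) S by
    simpa only [separates_comm] using hS)
  have hab' := hS.prop.not_reachableAvoiding
  exact ⟨s, t, fun hst => hab' (has.trans (hst ▸ hbt.symm)),
    fun hst => hab' ((has.of_adj hst hbt.notMem_right).trans hbt.symm), hs, ht⟩

end Dirac

/-- If `G` is a chordal graph and `X` is a minimal separator of `G`, then every connected
component of `G − X` contains a vertex that is simplicial in `G`. -/
theorem minimal_separator_components_have_simplicial {V : Type*} [Fintype V]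
    (G : SimpleGraph V) (hG : IsChordal G) (X : Set V) (u v : V)
    (hsep : Separates G X u v)
    (hmin : ∀ Y : Set V, Y ⊂ X → ¬ Separates G Y u v) :
    ∀ w : V, w ∉ X → ∃ s : V, s ∉ X ∧ ReachableAvoiding G X w s ∧ IsSimplicial G s := by
  intro w hw
  have hX : Minimal (Separates G · u v) X := Set.minimal_iff_forall_ssubset.2 ⟨hsep, hmin⟩
  obtain ⟨s, hws, hs⟩ := exists_reachableAvoiding_isSimplicial
    (hG.isClique_of_minimal_separates hX) hw rfl (hG.induce _).eq_top_or_exists_isSimplicial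
  exact ⟨s, hws.notMem_right, hws, hs⟩
end

section
/- If G is a 2-connected chordal graph and x, y are two neighbours of a vertex v, then there exists an x–y path all of whose vertices lie in N(v), i.e., N(v) induces a connected subgraph. -/
open SimpleGraph

namespace SimpleGraph

theorem cycleGraph_adj_iff_val {m : ℕ} {i j : Fin (m + 2)} :
    (cycleGraph (m + 2)).Adj i j ↔ j.val = i.val + 1 ∨ i.val = j.val + 1 ∨
      (i.val = 0 ∧ j.val = m + 1) ∨ (j.val = 0 ∧ i.val = m + 1) := by
  rw [cycleGraph_adj']
  rcases lt_trichotomy i j with h | rfl | h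
  · rw [Fin.coe_sub_iff_lt.2 h, Fin.sub_val_of_le h.le]; omega
  · simp only [sub_self, Fin.val_zero]; omega
  · rw [Fin.coe_sub_iff_lt.2 h, Fin.sub_val_of_le h.le]; omega

namespace Walk

variable {V : Type*} {G : SimpleGraph V} {v x y : V}

theorem adj_getVert_iff_of_forall_not_adj {p : G.Walk x y}
    (hchord : ∀ a b, a + 2 ≤ b → b ≤ p.length → ¬ G.Adj (p.getVert a) (p.getVert b))
    {i j : ℕ} (hi : i ≤ p.length) (hj : j ≤ p.length) :
    G.Adj (p.getVert i) (p.getVert j) ↔ j = i + 1 ∨ i = j + 1 := by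
  refine ⟨fun hadj => ?_, ?_⟩
  · have hij : i ≠ j := by rintro rfl; exact hadj.ne rfl
    have : ¬ i + 2 ≤ j := fun h => hchord i j h hj hadj
    have : ¬ j + 2 ≤ i := fun h => hchord j i h hi hadj.symm
    omega
  · rintro (rfl | rfl)
    · exact p.adj_getVert_succ (by omega)
    · exact (p.adj_getVert_succ (by omega)).symm

theorem nonempty_cycleGraph_embedding_of_cone {p : G.Walk x y} (hp : p.IsPath)
    (hchord : ∀ a b, a + 2 ≤ b → b ≤ p.length → ¬ G.Adj (p.getVert a) (p.getVert b))
    (hv : v ∉ p.support) (hx : G.Adj v x) (hy : G.Adj v y)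
    (hinner : ∀ i, 0 < i → i < p.length → ¬ G.Adj v (p.getVert i)) :
    Nonempty (cycleGraph (p.length + 2) ↪g G) := by
  let f : Fin (p.length + 2) → V := Fin.cons v fun i => p.getVert i
  have hf : Function.Injective f := by
    refine Fin.cons_injective_iff.2 ⟨?_, fun i j hij => ?_⟩
    · rintro ⟨i, rfl⟩
      exact hv (p.getVert_mem_support i)
    · exact Fin.ext (hp.getVert_injOn i.is_le j.is_le hij)
  have hcone : ∀ i ≤ p.length, G.Adj v (p.getVert i) ↔ i = 0 ∨ i = p.length := by
    refine fun i hi => ⟨fun h => ?_, ?_⟩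
    · by_contra! h'
      exact hinner i (by omega) (by omega) h
    · rintro (rfl | rfl)
      · rwa [getVert_zero]
      · rwa [getVert_length]
  refine ⟨⟨⟨f, hf⟩, fun {i j} => ?_⟩⟩
  show G.Adj (f i) (f j) ↔ _
  rw [cycleGraph_adj_iff_val]
  cases i using Fin.cases with
  | zero => cases j using Fin.cases with
    | zero => simp [f]
    | succ j =>
      simp only [f, Fin.cons_zero, Fin.cons_succ, Fin.val_zero, Fin.val_succ, true_and]
      rw [hcone j j.is_le]
      omega
  | succ i => cases j using Fin.cases with
    | zero =>
      simp only [f, Fin.cons_zero, Fin.cons_succ, Fin.val_zero, Fin.val_succ, true_and]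
      rw [G.adj_comm, hcone i i.is_le]
      omega
    | succ j =>
      simp only [f, Fin.cons_succ, Fin.val_succ]
      rw [adj_getVert_iff_of_forall_not_adj hchord i.is_le j.is_le]
      omega

theorem support_take_subset (p : G.Walk x y) (n : ℕ) : (p.take n).support ⊆ p.support := by
  rw [support_take]
  exact List.take_subset _ _

theorem support_drop_subset (p : G.Walk x y) (n : ℕ) : (p.drop n).support ⊆ p.support := by
  rw [drop_support_eq_support_drop_min]
  exact List.drop_subset _ _

theorem not_adj_getVert_of_forall_length_le {p : G.Walk x y} (hv : v ∉ p.support)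
    (hmin : ∀ q : G.Walk x y, v ∉ q.support → p.length ≤ q.length)
    {a b : ℕ} (hab : a + 2 ≤ b) (hb : b ≤ p.length) : ¬ G.Adj (p.getVert a) (p.getVert b) := by
  intro hadj
  have hq : v ∉ ((p.take a).append (cons hadj (p.drop b))).support := by
    rw [support_append, support_cons, List.tail_cons, List.mem_append, not_or]
    exact ⟨fun h => hv (p.support_take_subset a h), fun h => hv (p.support_drop_subset b h)⟩
  have := hmin _ hq
  rw [length_append, length_cons, take_length, drop_length] at this
  omega

end Walk

end SimpleGraph

open Walk in
theorem IsChordal.reachable_induce_neighborSet {V : Type*} {G : SimpleGraph V}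
    (hG : IsChordal G) {v x y : V} (hx : G.Adj v x) (hy : G.Adj v y) (p : G.Walk x y)
    (hv : v ∉ p.support) : (G.induce (G.neighborSet v)).Reachable ⟨x, hx⟩ ⟨y, hy⟩ := by
  induction hn : p.length using Nat.strong_induction_on generalizing x y with
  | _ n ih =>
  subst hn
  by_cases hinner : ∃ i, 0 < i ∧ i < p.length ∧ G.Adj v (p.getVert i)
  · obtain ⟨i, hi0, hil, hvi⟩ := hinner
    have htake := ih _ (by rw [take_length]; omega) hx hvi (p.take i)
      (fun h => hv (p.support_take_subset i h)) rfl
    have hdrop := ih _ (by rw [drop_length]; omega) hvi hy (p.drop i)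
      (fun h => hv (p.support_drop_subset i h)) rfl
    exact htake.trans hdrop
  by_cases hshort : ∃ q : G.Walk x y, v ∉ q.support ∧ q.length < p.length
  · obtain ⟨q, hq, hlt⟩ := hshort
    exact ih _ hlt hx hy q hq rfl
  push Not at hinner hshort
  rcases Nat.lt_or_ge p.length 2 with hlen | hlen
  · obtain h | h : p.length = 0 ∨ p.length = 1 := by omega
    · cases eq_of_length_eq_zero h
      rfl
    · exact Adj.reachable (induce_adj.2 (p.adj_of_length_eq_one h))
  have hpath : p.IsPath := by
    classical
    rw [← p.bypass_eq_self_of_length_le_length_bypass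
      (hshort _ fun h => hv (p.support_bypass_subset_support h))]
    exact p.bypass_isPath
  exact ((hG _ (by omega)).false (nonempty_cycleGraph_embedding_of_cone hpath
    (fun _ _ => not_adj_getVert_of_forall_length_le hv hshort) hv hx hy hinner).some).elim

theorem chordal_twoConnected_locallyConnected_general {V : Type*}
    (G : SimpleGraph V) (hG : IsChordal G)
    (hcut : ∀ w : V, (G.induce {w}ᶜ).Connected)
    (v x y : V) (hx : G.Adj v x) (hy : G.Adj v y) :
    (G.induce (G.neighborSet v)).Reachable ⟨x, hx⟩ ⟨y, hy⟩ := by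
  obtain ⟨p⟩ := (hcut v).preconnected ⟨x, Set.mem_compl_singleton_iff.2 hx.ne'⟩
    ⟨y, Set.mem_compl_singleton_iff.2 hy.ne'⟩
  have hv : v ∉ (p.map (Embedding.induce ({v}ᶜ : Set V)).toHom).support := by
    rw [Walk.support_map, List.mem_map]
    rintro ⟨w, -, hw⟩
    exact w.2 hw
  exact hG.reachable_induce_neighborSet hx hy _ hv

/-- If `G` is a 2-connected chordal graph (connected, at least 3 vertices, no cutvertex)
and `x`, `y` are two neighbours of a vertex `v`, then there is an `x`–`y` path all of whose
vertices lie in `N(v)`; i.e. `x` and `y` are connected inside the subgraph induced by `N(v)`. -/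
theorem chordal_twoConnected_locallyConnected {V : Type*} [Fintype V]
    (G : SimpleGraph V) (hG : IsChordal G) (hconn : G.Connected)
    (hcard : 3 ≤ Fintype.card V)
    (hcut : ∀ w : V, (G.induce {w}ᶜ).Connected)
    (v x y : V) (hx : G.Adj v x) (hy : G.Adj v y) :
    (G.induce (G.neighborSet v)).Reachable ⟨x, hx⟩ ⟨y, hy⟩ :=
  chordal_twoConnected_locallyConnected_general G hG hcut v x y hx hy
end

section
/- If C is a cycle in a chordal graph G and uv is an edge of C, then u and v have a common neighbour among the vertices of C. -/
open SimpleGraph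

/-!
Pass to the subgraph induced on the vertices of `C`, which is again chordal. There `C` minus the
edge `uv` still joins `u` to `v`, so take a shortest `u`-`v` walk avoiding `uv`. A chord between
two of its vertices, other than `uv` itself, would shorten it; so the walk closed up by `uv` is an
induced cycle, of length 3 by chordality, and the middle vertex of the walk is the common
neighbour.
-/

namespace SimpleGraph

theorem cycleGraph_adj_iff_of_lt {n : ℕ} {i j : Fin n} (hij : i < j) :
    (cycleGraph n).Adj i j ↔ j.val = i.val + 1 ∨ (i.val = 0 ∧ j.val + 1 = n) := by
  rw [cycleGraph_adj', Fin.coe_sub_iff_lt.mpr hij, Fin.coe_sub_iff_le.mpr hij.le]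
  omega

namespace Walk

variable {V : Type*} {G : SimpleGraph V} {u v : V}

theorem dist_getVert_of_length_eq_dist {p : G.Walk u v} (hp : p.length = G.dist u v) {i j : ℕ}
    (hij : i ≤ j) (hj : j ≤ p.length) : G.dist (p.getVert i) (p.getVert j) = j - i := by
  have hsub := length_eq_dist_of_subwalk hp ((isSubwalk_take _ (j - i)).trans (isSubwalk_drop p i))
  rw [take_length, drop_length, drop_getVert, Nat.add_sub_cancel' hij] at hsub
  omega

theorem adj_getVert_iff_of_length_eq_dist {p : G.Walk u v} (hp : p.length = G.dist u v)
    {i j : ℕ} (hij : i < j) (hj : j ≤ p.length) :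
    G.Adj (p.getVert i) (p.getVert j) ↔ j = i + 1 := by
  rw [← dist_eq_one_iff_adj, dist_getVert_of_length_eq_dist hp hij.le hj]
  omega

theorem nonempty_cycleGraph_embedding_of_length_eq_dist (huv : G.Adj u v)
    (p : (G.deleteEdges {s(u, v)}).Walk u v)
    (hp : p.length = (G.deleteEdges {s(u, v)}).dist u v) :
    Nonempty (cycleGraph (p.length + 1) ↪g G) := by
  have hinj := (p.isPath_of_length_eq_dist hp).getVert_injOn
  have adj_iff : ∀ i j : ℕ, i < j → j ≤ p.length →
      (G.Adj (p.getVert i) (p.getVert j) ↔ j = i + 1 ∨ (i = 0 ∧ j = p.length)) := by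
    intro i j hij hj
    constructor
    · intro h
      by_cases he : s(p.getVert i, p.getVert j) = s(u, v)
      · right
        rcases Sym2.eq_iff.mp he with ⟨hiu, hjv⟩ | ⟨hiv, -⟩
        · exact ⟨hinj (by simp; omega) (by simp) (hiu.trans p.getVert_zero.symm),
            hinj (by simp; omega) (by simp) (hjv.trans p.getVert_length.symm)⟩
        · have := hinj (by simp; omega) (by simp) (hiv.trans p.getVert_length.symm)
          omega
      · left
        exact (adj_getVert_iff_of_length_eq_dist hp hij hj).mp (deleteEdges_adj.mpr ⟨h, he⟩)
    · rintro (rfl | ⟨rfl, rfl⟩)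
      · exact deleteEdges_le _ (p.adj_getVert_succ (by omega))
      · simpa using huv
  refine ⟨⟨⟨fun i => p.getVert i,
    fun i j h => Fin.ext (hinj (by simp; omega) (by simp; omega) h)⟩, fun {i j} => ?_⟩⟩
  show G.Adj (p.getVert i) (p.getVert j) ↔ _
  rcases lt_trichotomy i j with h | rfl | h
  · rw [cycleGraph_adj_iff_of_lt h, adj_iff _ _ h (by omega), Nat.add_right_cancel_iff]
  · simp
  · rw [G.adj_comm, (cycleGraph _).adj_comm, cycleGraph_adj_iff_of_lt h, adj_iff _ _ h (by omega),
      Nat.add_right_cancel_iff]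

end Walk

end SimpleGraph

theorem IsChordal.of_embedding {V W : Type*} {G : SimpleGraph V} {H : SimpleGraph W}
    (hG : IsChordal G) (f : H ↪g G) : IsChordal H :=
  fun n hn => ⟨fun g => (hG n hn).false (g.trans f)⟩

theorem IsChordal.exists_adj_adj_of_reachable_deleteEdges {V : Type*} {G : SimpleGraph V}
    (hG : IsChordal G) {u v : V} (huv : G.Adj u v)
    (hr : (G.deleteEdges {s(u, v)}).Reachable u v) : ∃ t, G.Adj u t ∧ G.Adj v t := by
  obtain ⟨p, hp⟩ := hr.exists_walk_length_eq_dist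
  have h2 : 2 ≤ p.length := hp ▸ hr.one_lt_dist_of_ne_of_not_adj huv.ne (by simp)
  have h3 : ¬ 3 ≤ p.length := fun h3 =>
    (hG _ (by omega)).false (Walk.nonempty_cycleGraph_embedding_of_length_eq_dist huv p hp).some
  have hv : p.getVert 2 = v := by rw [show 2 = p.length by omega, Walk.getVert_length]
  refine ⟨p.getVert 1, deleteEdges_le {s(u, v)} ?_, deleteEdges_le {s(u, v)} ?_⟩
  · simpa using p.adj_getVert_succ (i := 0) (by omega)
  · simpa [hv] using (p.adj_getVert_succ (i := 1) (by omega)).symm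

theorem IsChordal.exists_adj_adj_of_isCycle {V : Type*} {G : SimpleGraph V} (hG : IsChordal G)
    {w : V} {c : G.Walk w w} (hc : c.IsCycle) {u v : V} (huv : s(u, v) ∈ c.edges) :
    ∃ t, G.Adj u t ∧ G.Adj v t :=
  hG.exists_adj_adj_of_reachable_deleteEdges (c.adj_of_mem_edges huv)
    (adj_and_reachable_delete_edges_iff_exists_cycle.mpr ⟨w, c, hc, huv⟩).2

/-- If `C` is a cycle in a chordal graph `G` and `uv` is an edge of `C`, then `u` and `v`
have a common neighbour among the vertices of `C`. -/
theorem chordal_cycle_edge_common_neighbor {V : Type*} (G : SimpleGraph V)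
    (hG : IsChordal G) {w : V} (c : G.Walk w w) (hc : c.IsCycle)
    (u v : V) (huv : s(u, v) ∈ c.edges) :
    ∃ t ∈ c.support, t ≠ u ∧ t ≠ v ∧ G.Adj u t ∧ G.Adj v t := by
  set S : Set V := {x | x ∈ c.support}
  set c' := c.induce S fun _ hx => hx
  have hc' : c'.IsCycle := .of_map (f := (Embedding.induce S).toHom) (by rwa [Walk.map_induce])
  have hedges := Walk.edges_map (Embedding.induce S).toHom c'
  rw [Walk.map_induce] at hedges
  obtain ⟨⟨a, b⟩, hab, habuv⟩ := List.mem_map.mp (hedges ▸ huv)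
  obtain ⟨t, hat, hbt⟩ :=
    (hG.of_embedding (Embedding.induce S)).exists_adj_adj_of_isCycle hc' hab
  rcases Sym2.eq_iff.mp habuv with ⟨rfl, rfl⟩ | ⟨rfl, rfl⟩
  · exact ⟨t, t.2, (hat.ne' <| Subtype.ext ·), (hbt.ne' <| Subtype.ext ·), hat, hbt⟩
  · exact ⟨t, t.2, (hbt.ne' <| Subtype.ext ·), (hat.ne' <| Subtype.ext ·), hbt, hat⟩
end

section
/- Let G be a chordal graph, C a cycle in G, Q a connected component of G − V(C), and let x, y ∈ V(C) be nonadjacent vertices each having a neighbour in Q. If a is a neighbour of x on C with no neighbour in Q and c is a neighbour of y on C with no neighbour in Q, and G is P₅-free, then a contradiction arises; equivalently, in a P₅-free chordal graph, for any two nonadjacent vertices x, y on C with neighbours in a common component Q of G − V(C), at least one of x, y has both of its cycle-neighbours adjacent to some vertex of Q. -/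
/-!
Join `x` to `y` by a shortest path through `Q`. It is induced, and `a`, `b` (which lie on the
cycle, hence outside `Q`) have no neighbour in its interior. If the path is `x q y`, then
`a ~ y` or `b ~ x` closes an induced `C₄`, `a ~ b` an induced `C₅` `a x q y b`, and otherwise
`a x q y b` is an induced `P₅`. If it starts `x q₁ q₂ z`, then `a x q₁ q₂ z` is an induced `C₅`
or `P₅`.
-/

open SimpleGraph

namespace SimpleGraph

variable {V W : Type*} {G : SimpleGraph V}

theorem isIndContained_of_adj_iff {H : SimpleGraph W} (f : W → V) (hf : Function.Injective f)
    (hadj : ∀ i j, G.Adj (f i) (f j) ↔ H.Adj i j) : H ⊴ G :=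
  ⟨⟨⟨f, hf⟩, hadj _ _⟩⟩

theorem isIndContained_of_adj_iff_of_injective_neighborSet {H : SimpleGraph W} (f : W → V)
    (hH : Function.Injective H.neighborSet) (hadj : ∀ i j, G.Adj (f i) (f j) ↔ H.Adj i j) :
    H ⊴ G :=
  isIndContained_of_adj_iff f (fun i j hij ↦ hH <| Set.ext fun k ↦ by
    simp only [mem_neighborSet, ← hadj, hij]) hadj

theorem injective_neighborSet_pathGraph_five : Function.Injective (pathGraph 5).neighborSet := by
  intro i j h
  simp only [Set.ext_iff, mem_neighborSet, pathGraph_adj] at h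
  revert i j
  decide

theorem injective_neighborSet_cycleGraph_five : Function.Injective (cycleGraph 5).neighborSet := by
  intro i j h
  simp only [Set.ext_iff, mem_neighborSet, cycleGraph_adj] at h
  revert i j
  decide

theorem pathGraph_five_isIndContained {v₀ v₁ v₂ v₃ v₄ : V}
    (h₀₁ : G.Adj v₀ v₁) (h₁₂ : G.Adj v₁ v₂) (h₂₃ : G.Adj v₂ v₃) (h₃₄ : G.Adj v₃ v₄)
    (h₀₂ : ¬G.Adj v₀ v₂) (h₀₃ : ¬G.Adj v₀ v₃) (h₀₄ : ¬G.Adj v₀ v₄)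
    (h₁₃ : ¬G.Adj v₁ v₃) (h₁₄ : ¬G.Adj v₁ v₄) (h₂₄ : ¬G.Adj v₂ v₄) : pathGraph 5 ⊴ G := by
  refine isIndContained_of_adj_iff_of_injective_neighborSet ![v₀, v₁, v₂, v₃, v₄]
    injective_neighborSet_pathGraph_five fun i j ↦ ?_
  fin_cases i <;> fin_cases j <;> simp [pathGraph_adj, G.adj_comm, *]

theorem cycleGraph_five_isIndContained {v₀ v₁ v₂ v₃ v₄ : V}
    (h₀₁ : G.Adj v₀ v₁) (h₁₂ : G.Adj v₁ v₂) (h₂₃ : G.Adj v₂ v₃) (h₃₄ : G.Adj v₃ v₄)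
    (h₄₀ : G.Adj v₄ v₀) (h₀₂ : ¬G.Adj v₀ v₂) (h₀₃ : ¬G.Adj v₀ v₃)
    (h₁₃ : ¬G.Adj v₁ v₃) (h₁₄ : ¬G.Adj v₁ v₄) (h₂₄ : ¬G.Adj v₂ v₄) : cycleGraph 5 ⊴ G := by
  refine isIndContained_of_adj_iff_of_injective_neighborSet ![v₀, v₁, v₂, v₃, v₄]
    injective_neighborSet_cycleGraph_five fun i j ↦ ?_
  fin_cases i <;> fin_cases j <;> simp [G.adj_comm, h₄₀.symm, *] <;> decide

theorem cycleGraph_four_isIndContained {v₀ v₁ v₂ v₃ : V}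
    (h₀₁ : G.Adj v₀ v₁) (h₁₂ : G.Adj v₁ v₂) (h₂₃ : G.Adj v₂ v₃) (h₃₀ : G.Adj v₃ v₀)
    (h₀₂ : ¬G.Adj v₀ v₂) (h₁₃ : ¬G.Adj v₁ v₃) (hv₀₂ : v₀ ≠ v₂) (hv₁₃ : v₁ ≠ v₃) :
    cycleGraph 4 ⊴ G := by
  refine isIndContained_of_adj_iff ![v₀, v₁, v₂, v₃] ?_ fun i j ↦ ?_
  · intro i j
    fin_cases i <;> fin_cases j <;>
      simp [h₀₁.ne, h₁₂.ne, h₂₃.ne, h₃₀.ne, h₀₁.ne', h₁₂.ne', h₂₃.ne', h₃₀.ne', hv₀₂, hv₁₃,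
        hv₀₂.symm, hv₁₃.symm]
  · fin_cases i <;> fin_cases j <;> simp [G.adj_comm, h₃₀.symm, *] <;> decide

theorem Walk.not_adj_getVert_of_length_eq_dist {u v : V} {p : G.Walk u v}
    (hp : p.length = G.dist u v) {i j : ℕ} (hij : i + 1 < j) (hj : j ≤ p.length) :
    ¬G.Adj (p.getVert i) (p.getVert j) := fun h ↦ by
  have := dist_le ((p.take i).append (.cons h (p.drop j)))
  simp only [Walk.length_append, Walk.length_cons, Walk.take_length, Walk.drop_length] at this
  omega

theorem exists_common_neighbor_or_induced_path_of_connected_induce {Q : Set V}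
    (hQ : (G.induce Q).Connected) {x y : V} (hne : x ≠ y) (hxy : ¬G.Adj x y)
    (hxQ : ∃ q ∈ Q, G.Adj x q) (hyQ : ∃ q ∈ Q, G.Adj y q) :
    (∃ q ∈ Q, G.Adj x q ∧ G.Adj q y) ∨
      ∃ q₁ ∈ Q, ∃ q₂ ∈ Q, ∃ z, G.Adj x q₁ ∧ G.Adj q₁ q₂ ∧ G.Adj q₂ z ∧
        ¬G.Adj x q₂ ∧ ¬G.Adj x z ∧ ¬G.Adj q₁ z := by
  obtain ⟨qx, hqx, hxqx⟩ := hxQ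
  obtain ⟨qy, hqy, hyqy⟩ := hyQ
  let S : Set V := insert x (insert y Q)
  have hQS : Q ⊆ S := (Set.subset_insert _ _).trans (Set.subset_insert _ _)
  let x' : S := ⟨x, Set.mem_insert _ _⟩
  let y' : S := ⟨y, Set.mem_insert_of_mem _ (Set.mem_insert _ _)⟩
  have hreach : (G.induce S).Reachable x' y' :=
    (Adj.reachable (v := ⟨qx, hQS hqx⟩) hxqx).trans <|
      ((hQ ⟨qx, hqx⟩ ⟨qy, hqy⟩).map (G.induceHomOfLE hQS).toHom).trans
        (Adj.reachable (v := y') hyqy.symm)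
  -- a shortest `x`–`y` path in `G[Q ∪ {x, y}]` is induced, and its interior lies in `Q`
  obtain ⟨p, hp, hlen⟩ := hreach.exists_path_of_dist
  have hlong : 1 < p.length :=
    hlen ▸ hreach.one_lt_dist_of_ne_of_not_adj (fun h ↦ hne congr(Subtype.val $h)) hxy
  have hinterior {i : ℕ} (hi₀ : 0 < i) (hi : i < p.length) : (p.getVert i : V) ∈ Q := by
    rcases (p.getVert i).2 with h | h | h
    · exact absurd ((hp.getVert_eq_start_iff hi.le).1 (Subtype.ext h)) hi₀.ne'
    · exact absurd ((hp.getVert_eq_end_iff hi.le).1 (Subtype.ext h)) hi.ne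
    · exact h
  have hadj {i : ℕ} (hi : i < p.length) : G.Adj (p.getVert i) (p.getVert (i + 1)) :=
    p.adj_getVert_succ hi
  have hnadj {i j : ℕ} (hij : i + 1 < j) (hj : j ≤ p.length) :
      ¬G.Adj (p.getVert i) (p.getVert j) :=
    Walk.not_adj_getVert_of_length_eq_dist hlen hij hj
  have hstart : p.getVert 0 = x' := p.getVert_zero
  obtain hlen₂ | hlen₃ : p.length = 2 ∨ 3 ≤ p.length := by omega
  · have hend : p.getVert 2 = y' := hlen₂ ▸ p.getVert_length
    left
    refine ⟨p.getVert 1, hinterior one_pos (by omega), ?_, ?_⟩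
    · simpa [hstart] using hadj (i := 0) (by omega)
    · simpa [hend] using hadj (i := 1) (by omega)
  · right
    refine ⟨p.getVert 1, hinterior one_pos (by omega), p.getVert 2, hinterior two_pos (by omega),
      p.getVert 3, ?_, hadj (by omega), hadj (by omega), ?_, ?_, hnadj (by omega) hlen₃⟩
    · simpa [hstart] using hadj (i := 0) (by omega)
    · simpa [hstart] using hnadj (i := 0) (j := 2) (by omega) (by omega)
    · simpa [hstart] using hnadj (i := 0) (j := 3) (by omega) hlen₃

theorem _root_.IsChordal.not_cycleGraph_isIndContained (hG : IsChordal G) {n : ℕ} (hn : 4 ≤ n) :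
    ¬cycleGraph n ⊴ G :=
  fun ⟨e⟩ ↦ (hG n hn).false e

theorem false_of_induced_path_four_of_private_neighbor (hC5 : ¬cycleGraph 5 ⊴ G)
    (hP5 : ¬pathGraph 5 ⊴ G) {a v₀ v₁ v₂ v₃ : V}
    (h₀₁ : G.Adj v₀ v₁) (h₁₂ : G.Adj v₁ v₂) (h₂₃ : G.Adj v₂ v₃)
    (h₀₂ : ¬G.Adj v₀ v₂) (h₀₃ : ¬G.Adj v₀ v₃) (h₁₃ : ¬G.Adj v₁ v₃)
    (ha₀ : G.Adj a v₀) (ha₁ : ¬G.Adj a v₁) (ha₂ : ¬G.Adj a v₂) : False := by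
  by_cases ha₃ : G.Adj a v₃
  · exact hC5 (cycleGraph_five_isIndContained ha₀ h₀₁ h₁₂ h₂₃ ha₃.symm ha₁ ha₂ h₀₂ h₀₃ h₁₃)
  · exact hP5 (pathGraph_five_isIndContained ha₀ h₀₁ h₁₂ h₂₃ ha₁ ha₂ ha₃ h₀₂ h₀₃ h₁₃)

theorem false_of_induced_path_three_of_private_neighbors (hC4 : ¬cycleGraph 4 ⊴ G)
    (hC5 : ¬cycleGraph 5 ⊴ G) (hP5 : ¬pathGraph 5 ⊴ G) {a x q y b : V}
    (hxq : G.Adj x q) (hqy : G.Adj q y) (hxy : ¬G.Adj x y) (hne : x ≠ y)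
    (hax : G.Adj a x) (haq : ¬G.Adj a q) (hqa : q ≠ a)
    (hby : G.Adj b y) (hbq : ¬G.Adj b q) (hqb : q ≠ b) : False := by
  by_cases hay : G.Adj a y
  · exact hC4 (cycleGraph_four_isIndContained hxq hqy hay.symm hax hxy (haq ·.symm) hne hqa)
  by_cases hbx : G.Adj b x
  · exact hC4 (cycleGraph_four_isIndContained hqy.symm hxq.symm hbx.symm hby (hxy ·.symm)
      (hbq ·.symm) hne.symm hqb)
  exact false_of_induced_path_four_of_private_neighbor hC5 hP5 hxq hqy hby.symm hxy
    (hbx ·.symm) (hbq ·.symm) hax haq hay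

end SimpleGraph

theorem p5free_chordal_cycle_component_contradiction_general {V : Type*} (G : SimpleGraph V)
    (hG : IsChordal G) (hP5 : IsEmpty (pathGraph 5 ↪g G))
    {u : V} (c : G.Walk u u)
    (Q : Set V)
    (hQdisj : ∀ q ∈ Q, q ∉ c.support)
    (hQconn : (G.induce Q).Connected)
    (x y : V) (hxy : ¬ G.Adj x y) (hne : x ≠ y)
    (hxQ : ∃ q ∈ Q, G.Adj x q) (hyQ : ∃ q ∈ Q, G.Adj y q)
    (a : V) (ha : s(x, a) ∈ c.edges) (haQ : ∀ q ∈ Q, ¬ G.Adj a q)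
    (b : V) (hb : s(y, b) ∈ c.edges) (hbQ : ∀ q ∈ Q, ¬ G.Adj b q) :
    False := by
  have hC4 := hG.not_cycleGraph_isIndContained (n := 4) le_rfl
  have hC5 := hG.not_cycleGraph_isIndContained (n := 5) (by norm_num)
  have hP5' : ¬pathGraph 5 ⊴ G := fun ⟨e⟩ ↦ hP5.false e
  have hax : G.Adj a x := (c.adj_of_mem_edges ha).symm
  have hby : G.Adj b y := (c.adj_of_mem_edges hb).symm
  have haQ' : a ∉ Q := fun h ↦ hQdisj a h (c.snd_mem_support_of_mem_edges ha)
  have hbQ' : b ∉ Q := fun h ↦ hQdisj b h (c.snd_mem_support_of_mem_edges hb)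
  obtain ⟨q, hq, hxq, hqy⟩ | ⟨q₁, hq₁, q₂, hq₂, z, hxq₁, hq₁q₂, hq₂z, hxq₂, hxz, hq₁z⟩ :=
    exists_common_neighbor_or_induced_path_of_connected_induce hQconn hne hxy hxQ hyQ
  · exact false_of_induced_path_three_of_private_neighbors hC4 hC5 hP5' hxq hqy hxy hne
      hax (haQ q hq) (ne_of_mem_of_not_mem hq haQ') hby (hbQ q hq) (ne_of_mem_of_not_mem hq hbQ')
  · exact false_of_induced_path_four_of_private_neighbor hC5 hP5' hxq₁ hq₁q₂ hq₂z hxq₂ hxz hq₁z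
      hax (haQ q₁ hq₁) (haQ q₂ hq₂)

/-- Let `G` be a `P₅`-free chordal graph, `c` a cycle in `G`, and `Q` a connected component
of `G − V(c)`. If `x, y ∈ V(c)` are nonadjacent, each with a neighbour in `Q`, and `a` is a
cycle-neighbour of `x` with no neighbour in `Q` while `b` is a cycle-neighbour of `y` with
no neighbour in `Q`, then a contradiction arises. -/
theorem p5free_chordal_cycle_component_contradiction {V : Type*} (G : SimpleGraph V)
    (hG : IsChordal G) (hP5 : IsEmpty (pathGraph 5 ↪g G))
    {u : V} (c : G.Walk u u) (hc : c.IsCycle)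
    (Q : Set V)
    (hQdisj : ∀ q ∈ Q, q ∉ c.support)
    (hQconn : (G.induce Q).Connected)
    (hQclosed : ∀ q ∈ Q, ∀ w : V, G.Adj q w → w ∈ c.support ∨ w ∈ Q)
    (x y : V) (hxC : x ∈ c.support) (hyC : y ∈ c.support) (hxy : ¬ G.Adj x y) (hne : x ≠ y)
    (hxQ : ∃ q ∈ Q, G.Adj x q) (hyQ : ∃ q ∈ Q, G.Adj y q)
    (a : V) (ha : s(x, a) ∈ c.edges) (haQ : ∀ q ∈ Q, ¬ G.Adj a q)
    (b : V) (hb : s(y, b) ∈ c.edges) (hbQ : ∀ q ∈ Q, ¬ G.Adj b q) :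
    False :=
  p5free_chordal_cycle_component_contradiction_general G hG hP5 c Q hQdisj hQconn x y hxy hne hxQ
    hyQ a ha haQ b hb hbQ
end
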